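/- For a continuously differentiable function g : ℝ → ℝ with a single simple zero at x₀ (g(x₀) = 0, g'(x₀) ≠ 0, and g(x) ≠ 0 for x ≠ x₀), and any continuous compactly supported test function φ : ℝ → ℝ, the composition of the Dirac delta with g satisfies ∫ φ(x) δ(g(x)) dx = φ(x₀)/|g'(x₀)|, where the left side is interpreted as the limit lim_{ε→0} ∫ φ(x) ρ_ε(g(x)) dx for a standard mollifier family ρ_ε. -/

import Mathlib

/-!
Away from `x₀` the integrand vanishes for small `ε`, since `|g|` is bounded below on the
compact set `tsupport φ` minus a neighbourhood of `x₀` while `ρ` has bounded support. Near `x₀`,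
`g` is a local diffeomorphism, and the substitution `y = g x` turns the integral into
`∫ G y ρ_ε(y) dy` with `G = (φ / |g'|) ∘ g⁻¹`, which is integrable and continuous at `g x₀ = 0`;
the mollifier `ρ_ε` then concentrates this integral at `G 0 = φ x₀ / |g' x₀|`.
-/

open MeasureTheory Filter Set Topology

theorem HasCompactSupport.eventually_comp_div_eq_zero {ρ : ℝ → ℝ} (hρ : HasCompactSupport ρ)
    {m : ℝ} (hm : 0 < m) : ∀ᶠ ε in 𝓝[>] 0, ∀ t, m ≤ |t| → ρ (t / ε) = 0 := by
  obtain ⟨R, hR, hρR⟩ : ∃ R > 0, ∀ t, R < |t| → ρ t = 0 := by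
    obtain ⟨R, hR⟩ := hρ.isBounded.subset_closedBall 0
    refine ⟨max R 1, by positivity, fun t ht => image_eq_zero_of_notMem_tsupport fun hmem => ?_⟩
    have : |t| ≤ R := by simpa using hR hmem
    exact ht.not_ge (this.trans (le_max_left R 1))
  filter_upwards [Ioo_mem_nhdsGT (div_pos hm hR)] with ε ⟨hε, hεm⟩ t ht
  refine hρR _ ?_
  rw [abs_div, abs_of_pos hε, lt_div_iff₀ hε]
  exact ((lt_div_iff₀' hR).1 hεm).trans_le ht

theorem eventually_integral_eq_setIntegral_of_zeros_subset {ρ g φ : ℝ → ℝ}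
    (hρ : HasCompactSupport ρ) (hg : Continuous g) (hφ : HasCompactSupport φ) {s : Set ℝ}
    (hs : IsOpen s) (hzero : ∀ x, g x = 0 → x ∈ s) :
    ∀ᶠ ε in 𝓝[>] 0, ∫ x, φ x * (ρ (g x / ε) / ε) = ∫ x in s, φ x * (ρ (g x / ε) / ε) := by
  obtain ⟨m, hm, hgm⟩ := (hφ.diff hs).exists_forall_le' hg.abs.continuousOn
    fun x hx => abs_pos.2 fun h => hx.2 (hzero x h)
  filter_upwards [hρ.eventually_comp_div_eq_zero hm] with ε hε
  refine (setIntegral_eq_integral_of_forall_compl_eq_zero fun x hx => ?_).symm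
  by_cases hφx : φ x = 0
  · simp [hφx]
  · simp [hε _ (hgm x ⟨subset_tsupport φ hφx, hx⟩)]
theorem HasStrictDerivAt.exists_isOpen_leftInvOn {g : ℝ → ℝ} {g' x₀ : ℝ}
    (hg : HasStrictDerivAt g g' x₀) (hg' : g' ≠ 0) {U : Set ℝ} (hU : U ∈ 𝓝 x₀) :
    ∃ s ⊆ U, IsOpen s ∧ x₀ ∈ s ∧ IsOpen (g '' s) ∧
      ∃ h : ℝ → ℝ, LeftInvOn h g s ∧ ContinuousOn h (g '' s) := by
  let Φ := (hg.hasStrictFDerivAt_equiv hg').toOpenPartialHomeomorph g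
  have hΦ : (Φ : ℝ → ℝ) = g := HasStrictFDerivAt.toOpenPartialHomeomorph_coe _
  have hsΦ : interior U ∩ Φ.source ⊆ Φ.source := inter_subset_right
  refine ⟨interior U ∩ Φ.source, inter_subset_left.trans interior_subset,
    isOpen_interior.inter Φ.open_source,
    ⟨mem_interior_iff_mem_nhds.2 hU, HasStrictFDerivAt.mem_toOpenPartialHomeomorph_source _⟩,
    hΦ ▸ Φ.isOpen_image_of_subset_source (isOpen_interior.inter Φ.open_source) hsΦ,
    Φ.symm, fun x hx => hΦ ▸ Φ.left_inv (hsΦ hx), ?_⟩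
  exact Φ.continuousOn_symm.mono (hΦ ▸ (Φ.image_source_eq_target ▸ image_mono hsΦ))

theorem setIntegral_mul_comp_eq_setIntegral_image {g g' h : ℝ → ℝ} {s : Set ℝ}
    (hs : MeasurableSet s) (hg : ∀ x ∈ s, HasDerivWithinAt g (g' x) s x) (hh : LeftInvOn h g s)
    (hg' : ∀ x ∈ s, g' x ≠ 0) (φ f : ℝ → ℝ) :
    ∫ x in s, φ x * f (g x) = ∫ y in g '' s, φ (h y) / |g' (h y)| * f y := by
  rw [integral_image_eq_integral_abs_deriv_smul hs hg hh.injOn]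
  refine setIntegral_congr_fun hs fun x hx => ?_
  have : |g' x| ≠ 0 := abs_ne_zero.2 (hg' x hx)
  simp only [hh hx, smul_eq_mul]
  field_simp

theorem ContinuousOn.integrable_indicator_of_bound {α E : Type*} [TopologicalSpace α]
    [MeasurableSpace α] [OpensMeasurableSpace α] [NormedAddCommGroup E]
    [SecondCountableTopologyEither α E] {μ : Measure α} {ψ : α → E} {S : Set α}
    (hψ : ContinuousOn ψ S) (hS : MeasurableSet S) (hμS : μ S < ⊤) {C : ℝ}
    (hC : ∀ y ∈ S, ‖ψ y‖ ≤ C) : Integrable (S.indicator ψ) μ :=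
  (integrable_indicator_iff hS).2 <|
    .of_bound hμS (hψ.aestronglyMeasurable hS) C ((ae_restrict_iff' hS).2 (.of_forall hC))

theorem ContDiff.exists_isOpen_setIntegral_mul_comp_eq_integral {g φ : ℝ → ℝ}
    (hg : ContDiff ℝ 1 g) {x₀ : ℝ} (hg' : deriv g x₀ ≠ 0) (hφ : Continuous φ) :
    ∃ s, IsOpen s ∧ x₀ ∈ s ∧ ∃ G : ℝ → ℝ, Integrable G ∧ ContinuousAt G (g x₀) ∧
      G (g x₀) = φ x₀ / |deriv g x₀| ∧
      ∀ f : ℝ → ℝ, ∫ x in s, φ x * f (g x) = ∫ y, G y * f y := by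
  have hdc : Continuous (deriv g) := hg.continuous_deriv le_rfl
  set c := |deriv g x₀| / 2
  have hc0 : 0 < c := half_pos (abs_pos.2 hg')
  -- `|g'| > c` keeps the density bounded, the unit ball keeps `g '' s` of finite measure.
  have hU : {x | c < |deriv g x|} ∩ Metric.ball x₀ 1 ∈ 𝓝 x₀ :=
    inter_mem ((isOpen_lt continuous_const hdc.abs).mem_nhds (half_lt_self (abs_pos.2 hg')))
      (Metric.ball_mem_nhds x₀ one_pos)
  obtain ⟨s, hsU, hs, hx₀, hS, h, hleft, hcont⟩ :=
    (hg.contDiffAt.hasStrictDerivAt one_ne_zero).exists_isOpen_leftInvOn hg' hU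
  have hc : ∀ x ∈ s, c < |deriv g x| := fun x hx => (hsU hx).1
  have hmaps : MapsTo h (g '' s) s := hleft.mapsTo (surjOn_image g s)
  obtain ⟨B, hB⟩ := (isCompact_closedBall x₀ 1).exists_bound_of_continuousOn hφ.continuousOn
  let ψ y := φ (h y) / |deriv g (h y)|
  have hψ : ContinuousOn ψ (g '' s) :=
    (hφ.comp_continuousOn hcont).div (hdc.comp_continuousOn hcont).abs
      fun y hy => (hc0.trans (hc _ (hmaps hy))).ne'
  have hψB : ∀ y ∈ g '' s, ‖ψ y‖ ≤ B / c := fun y hy => by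
    have hφB := hB _ (Metric.ball_subset_closedBall (hsU (hmaps hy)).2)
    simp only [ψ, norm_div, Real.norm_eq_abs, abs_abs] at hφB ⊢
    exact div_le_div₀ ((abs_nonneg _).trans hφB) hφB (by positivity) (hc _ (hmaps hy)).le
  have hfin : volume (g '' s) < ⊤ :=
    (measure_mono (image_mono (hsU.trans (inter_subset_right.trans
      Metric.ball_subset_closedBall)))).trans_lt
      ((isCompact_closedBall x₀ 1).image hg.continuous).measure_lt_top
  have hSx₀ : g '' s ∈ 𝓝 (g x₀) := hS.mem_nhds (mem_image_of_mem g hx₀)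
  refine ⟨s, hs, hx₀, (g '' s).indicator ψ,
    hψ.integrable_indicator_of_bound hS.measurableSet hfin hψB, ?_, ?_, fun f => ?_⟩
  · exact (hψ.continuousAt hSx₀).congr
      (eventuallyEq_of_mem hSx₀ fun y hy => (indicator_of_mem hy ψ).symm)
  · simp only [indicator_of_mem (mem_image_of_mem g hx₀), ψ, hleft hx₀]
  · simp_rw [← indicator_mul_left, integral_indicator hS.measurableSet]
    exact setIntegral_mul_comp_eq_setIntegral_image hs.measurableSet
      (fun x _ => (hg.differentiable one_ne_zero x).hasDerivAt.hasDerivWithinAt) hleft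
      (fun x hx => abs_pos.1 (hc0.trans (hc x hx))) φ f

theorem tendsto_integral_mul_comp_div_div {ρ G : ℝ → ℝ} (hρ0 : ∀ t, 0 ≤ ρ t)
    (hρsupp : HasCompactSupport ρ) (hρint : ∫ t, ρ t = 1) (hG : Integrable G)
    (hG0 : ContinuousAt G 0) :
    Tendsto (fun ε => ∫ y, G y * (ρ (y / ε) / ε)) (𝓝[>] 0) (𝓝 (G 0)) := by
  have hdecay : Tendsto (fun t : ℝ => ‖t‖ ^ Module.finrank ℝ ℝ * ρ t)
      (Bornology.cobounded ℝ) (𝓝 0) := by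
    rw [Metric.cobounded_eq_cocompact]
    exact (hρsupp.mul_left (f := fun t : ℝ => ‖t‖ ^ Module.finrank ℝ ℝ)).is_zero_at_infty
  have hpeak := (tendsto_integral_comp_smul_smul_of_integrable hρ0 hρint hdecay hG hG0).comp
    tendsto_inv_nhdsGT_zero
  refine hpeak.congr fun ε => ?_
  simp only [Function.comp_apply, Module.finrank_self, pow_one, smul_eq_mul]
  congr 1 with y
  ring_nf

theorem delta_comp_simple_zero_general
    (ρ : ℝ → ℝ) (hρ0 : ∀ t, 0 ≤ ρ t)
    (hρsupp : HasCompactSupport ρ) (hρint : ∫ t, ρ t = 1)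
    (g : ℝ → ℝ) (hg : ContDiff ℝ 1 g) (x₀ : ℝ) (hgx₀ : g x₀ = 0)
    (hg' : deriv g x₀ ≠ 0) (hunique : ∀ x ≠ x₀, g x ≠ 0)
    (φ : ℝ → ℝ) (hφ : Continuous φ) (hφsupp : HasCompactSupport φ) :
    Tendsto (fun ε : ℝ => ∫ x, φ x * (ρ (g x / ε) / ε))
      (nhdsWithin 0 (Ioi 0)) (nhds (φ x₀ / |deriv g x₀|)) := by
  obtain ⟨s, hs, hx₀, G, hG, hG0, hGx₀, hchange⟩ :=
    hg.exists_isOpen_setIntegral_mul_comp_eq_integral hg' hφ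
  rw [hgx₀] at hG0 hGx₀
  have hzero : ∀ x, g x = 0 → x ∈ s := fun x hx =>
    by_contra fun hxs => hunique x (fun h => hxs (h ▸ hx₀)) hx
  rw [← hGx₀]
  refine (tendsto_integral_mul_comp_div_div hρ0 hρsupp hρint hG hG0).congr' ?_
  filter_upwards [eventually_integral_eq_setIntegral_of_zeros_subset hρsupp hg.continuous hφsupp
    hs hzero] with ε hε
  exact (hε.trans (hchange fun t => ρ (t / ε) / ε)).symm

/-- Composition of the Dirac delta with a function having a single simple zero:
`∫ φ(x) δ(g(x)) dx = φ(x₀)/|g'(x₀)|`, where the delta is interpreted via a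
mollifier family `ρ_ε(t) = ρ(t/ε)/ε`. -/
theorem delta_comp_simple_zero
    (ρ : ℝ → ℝ) (hρc : Continuous ρ) (hρ0 : ∀ t, 0 ≤ ρ t)
    (hρsupp : HasCompactSupport ρ) (hρint : ∫ t, ρ t = 1)
    (g : ℝ → ℝ) (hg : ContDiff ℝ 1 g) (x₀ : ℝ) (hgx₀ : g x₀ = 0)
    (hg' : deriv g x₀ ≠ 0) (hunique : ∀ x ≠ x₀, g x ≠ 0)
    (φ : ℝ → ℝ) (hφ : Continuous φ) (hφsupp : HasCompactSupport φ) :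
    Tendsto (fun ε : ℝ => ∫ x, φ x * (ρ (g x / ε) / ε))
      (nhdsWithin 0 (Ioi 0)) (nhds (φ x₀ / |deriv g x₀|)) :=
  delta_comp_simple_zero_general ρ hρ0 hρsupp hρint g hg x₀ hgx₀ hg' hunique φ hφ hφsupp
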